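/- Let A be a finite-dimensional complex vector space carrying a unital associative ℂ-algebra structure and a coassociative counital ℂ-coalgebra structure, let Ω ∈ A be cocentral and non-degenerate, and let T : A → A be a linear map satisfying the pulling-through equation (1⊗x)·Δ(Ω) = (T(x)⊗1)·Δ(Ω) for all x ∈ A. Then T is an involution: T(T(x)) = x for all x ∈ A. -/
import Mathlib


/-!
STATEMENT 7: Let `A` be a finite-dimensional complex vector space carrying a unital
associative `ℂ`-algebra structure and a coassociative counital `ℂ`-coalgebra structure,
let `Ω ∈ A` be cocentral and non-degenerate, and let `T : A → A` be a linear map satisfying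
the pulling-through equation `(1 ⊗ x) * Δ Ω = (T x ⊗ 1) * Δ Ω` for all `x`.  Then `T` is an
involution: `T (T x) = x` for all `x`.
-/

open TensorProduct

noncomputable section

/-- `Ω` is non-degenerate:
`{(id ⊗ f) (Δ Ω) : f ∈ A*} = A` and `{(f ⊗ id) (Δ Ω) : f ∈ A*} = A`. -/
def IsNonDegenerate {A : Type*} [Ring A] [Algebra ℂ A] [Coalgebra ℂ A] (Ω : A) : Prop :=
  (∀ y : A, ∃ f : Module.Dual ℂ A,
      (TensorProduct.rid ℂ A) (LinearMap.lTensor A f (Coalgebra.comul Ω)) = y) ∧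
  (∀ y : A, ∃ f : Module.Dual ℂ A,
      (TensorProduct.lid ℂ A) (LinearMap.rTensor A f (Coalgebra.comul Ω)) = y)


private lemma comm_mul_aux {A : Type*} [Ring A] [Algebra ℂ A]
    (a b : A) (t : A ⊗[ℂ] A) :
    (TensorProduct.comm ℂ A A) ((a ⊗ₜ[ℂ] b) * t)
      = (b ⊗ₜ[ℂ] a) * (TensorProduct.comm ℂ A A) t := by
  induction t using TensorProduct.induction_on with
  | zero => simp
  | tmul c d => simp [Algebra.TensorProduct.tmul_mul_tmul]
  | add u v hu hv => simp [mul_add, map_add, hu, hv]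

private lemma lTensor_mul_aux {A : Type*} [Ring A] [Algebra ℂ A]
    (y : A) (f : Module.Dual ℂ A) (t : A ⊗[ℂ] A) :
    (TensorProduct.rid ℂ A) (LinearMap.lTensor A f ((y ⊗ₜ[ℂ] (1 : A)) * t))
      = y * (TensorProduct.rid ℂ A) (LinearMap.lTensor A f t) := by
  induction t using TensorProduct.induction_on with
  | zero => simp
  | tmul c d =>
      simp [Algebra.TensorProduct.tmul_mul_tmul, smul_mul_assoc, mul_smul_comm]
  | add u v hu hv => simp [mul_add, map_add, hu, hv]

theorem pulling_through_involution
    {A : Type*} [Ring A] [Algebra ℂ A] [FiniteDimensional ℂ A] [Coalgebra ℂ A]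
    (Ω : A)
    -- `Ω` is cocentral:
    (hcoc : (TensorProduct.comm ℂ A A) (Coalgebra.comul Ω) = Coalgebra.comul Ω)
    (hΩ : IsNonDegenerate Ω) (T : A →ₗ[ℂ] A)
    -- the pulling-through equation:
    (hT : ∀ x : A,
      ((1 : A) ⊗ₜ[ℂ] x) * Coalgebra.comul Ω = (T x ⊗ₜ[ℂ] (1 : A)) * Coalgebra.comul Ω) :
    ∀ x : A, T (T x) = x := by
  intro x
  have key : ((x - T (T x)) ⊗ₜ[ℂ] (1 : A)) * Coalgebra.comul Ω = 0 := by
    have h1 := hT x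
    have h2 := congrArg (TensorProduct.comm ℂ A A) h1
    rw [comm_mul_aux, comm_mul_aux, hcoc] at h2
    -- h2 : (x ⊗ₜ 1) * comul Ω = (1 ⊗ₜ T x) * comul Ω
    have h3 := hT (T x)
    rw [sub_tmul, sub_mul, h2, h3, sub_self]
  obtain ⟨f, hf⟩ := hΩ.1 1
  have h4 := congrArg (fun t => (TensorProduct.rid ℂ A) (LinearMap.lTensor A f t)) key
  simp only [map_zero] at h4
  rw [lTensor_mul_aux, hf, mul_one] at h4
  exact (sub_eq_zero.mp h4).symm


end
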